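/- Let n ≥ 2 and λ > 1, and let E_λ be the linear automorphism of ℝ^{n+1} = ℝ × ℝ^n multiplying the first coordinate by λ and fixing the remaining coordinates. Consider Ω⁺ := { v ∈ S^n : v_1 > 0 } ∖ { e_1 }, a component of the complement in S^n of the great hypersphere { v_1 = 0 } and the antipodal pair {±e_1}. Then the ℤ-action on Ω⁺ defined by m • v := E_λ^m v / ‖E_λ^m v‖ is well-defined, free, and properly discontinuous, and the quotient space Ω⁺/ℤ is homeomorphic to S^{n−1} × (ℝ/ℤ), where S^{n−1} is the unit sphere of ℝ^n. -/

import Mathlib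

noncomputable section

open Set

/-- `Ω⁺ := {v ∈ S^n : v₁ > 0} ∖ {e₁}` (with `v₁ = v 0` and `e₁` the first
standard basis vector), a component of the complement in `S^n` of the great
hypersphere `{v₁ = 0}` and the antipodal pair `{±e₁}`. -/
def OmegaPlus (n : ℕ) : Set (EuclideanSpace ℝ (Fin (n + 1))) :=
  {v | ‖v‖ = 1 ∧ 0 < v 0} \ {EuclideanSpace.single (0 : Fin (n + 1)) (1 : ℝ)}

/-- `E_λ^m`: the linear automorphism multiplying the first coordinate by `λ^m`
and fixing the remaining coordinates. -/
def Emap (n : ℕ) (lam : ℝ) (m : ℤ) (v : EuclideanSpace ℝ (Fin (n + 1))) :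
    EuclideanSpace ℝ (Fin (n + 1)) :=
  WithLp.toLp 2 (fun k : Fin (n + 1) => (if (k : ℕ) = 0 then lam ^ m else 1) * v k)

/-- The projectivized action `m • v := E_λ^m v / ‖E_λ^m v‖`. -/
def normActE (n : ℕ) (lam : ℝ) (m : ℤ) (v : EuclideanSpace ℝ (Fin (n + 1))) :
    EuclideanSpace ℝ (Fin (n + 1)) :=
  ‖Emap n lam m v‖⁻¹ • Emap n lam m v

/-- The orbit equivalence relation of the `ℤ`-action on `Ω⁺`. -/
def orbitRelE (n : ℕ) (lam : ℝ) (v w : ↥(OmegaPlus n)) : Prop :=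
  ∃ m : ℤ, normActE n lam m ↑v = ↑w

/-! Write `v = (v₁, w) ∈ ℝ × ℝⁿ`. A point of `Ω⁺` is determined by its direction
`w / ‖w‖ ∈ S^{n-1}` and its ratio `v₁ / ‖w‖ ∈ (0, ∞)`, and `m • v` has the same direction as `v`
and `λ^m` times its ratio. Taking `log_λ` of the ratio therefore gives a homeomorphism
`Ω⁺ ≃ₜ S^{n-1} × ℝ` that turns the action into translation by `m` on the `ℝ` factor, and
freeness, proper discontinuity and `Ω⁺/ℤ ≃ₜ S^{n-1} × ℝ/ℤ` are read off from `ℤ` acting on `ℝ`. -/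

open NormedSpace

lemma NormedSpace.continuousOn_normalize {V : Type*} [NormedAddCommGroup V] [NormedSpace ℝ V] :
    ContinuousOn (normalize : V → V) {0}ᶜ :=
  (continuousOn_id.norm.inv₀ fun _ hx => norm_ne_zero_iff.2 hx).smul continuousOn_id

namespace OmegaPlus

variable {n : ℕ}

def tail (v : EuclideanSpace ℝ (Fin (n + 1))) : EuclideanSpace ℝ (Fin n) :=
  WithLp.toLp 2 (Fin.tail v)

def cons (a : ℝ) (u : EuclideanSpace ℝ (Fin n)) : EuclideanSpace ℝ (Fin (n + 1)) :=
  WithLp.toLp 2 (Fin.cons a u)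

@[simp] lemma tail_apply (v : EuclideanSpace ℝ (Fin (n + 1))) (k : Fin n) :
    tail v k = v k.succ := rfl

@[simp] lemma cons_zero (a : ℝ) (u : EuclideanSpace ℝ (Fin n)) : cons a u 0 = a := rfl

@[simp] lemma tail_cons (a : ℝ) (u : EuclideanSpace ℝ (Fin n)) : tail (cons a u) = u := rfl

lemma cons_zero_tail (v : EuclideanSpace ℝ (Fin (n + 1))) : cons (v 0) (tail v) = v := by
  ext k
  exact Fin.cases rfl (fun _ => rfl) k

@[simp] lemma tail_zero : tail (0 : EuclideanSpace ℝ (Fin (n + 1))) = 0 := rfl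

lemma tail_smul (c : ℝ) (v : EuclideanSpace ℝ (Fin (n + 1))) : tail (c • v) = c • tail v := rfl

lemma smul_cons (c a : ℝ) (u : EuclideanSpace ℝ (Fin n)) :
    c • cons a u = cons (c * a) (c • u) := by
  ext k
  exact Fin.cases rfl (fun _ => rfl) k

lemma cons_one_zero : cons 1 (0 : EuclideanSpace ℝ (Fin n)) = EuclideanSpace.single 0 1 := by
  ext k
  refine Fin.cases (by simp) (fun j => ?_) k
  simp [cons, Fin.succ_ne_zero]

lemma norm_sq_eq (v : EuclideanSpace ℝ (Fin (n + 1))) : ‖v‖ ^ 2 = v 0 ^ 2 + ‖tail v‖ ^ 2 := by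
  simp [EuclideanSpace.real_norm_sq_eq, Fin.sum_univ_succ]

lemma continuous_tail : Continuous (tail (n := n)) :=
  (PiLp.continuous_toLp 2 _).comp <| continuous_pi fun k => (EuclideanSpace.proj k.succ).continuous

lemma continuous_cons : Continuous fun p : ℝ × EuclideanSpace ℝ (Fin n) => cons p.1 p.2 := by
  refine (PiLp.continuous_toLp 2 _).comp <| continuous_pi fun k => Fin.cases ?_ (fun j => ?_) k
  · exact continuous_fst
  · exact (EuclideanSpace.proj j).continuous.comp continuous_snd

variable {lam : ℝ}

lemma Emap_eq_cons (m : ℤ) (v : EuclideanSpace ℝ (Fin (n + 1))) :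
    Emap n lam m v = cons (lam ^ m * v 0) (tail v) := by
  ext k
  refine Fin.cases (by simp [Emap]) (fun j => ?_) k
  simp [Emap, cons]

@[simp] lemma Emap_apply_zero (m : ℤ) (v : EuclideanSpace ℝ (Fin (n + 1))) :
    Emap n lam m v 0 = lam ^ m * v 0 := by
  rw [Emap_eq_cons, cons_zero]

@[simp] lemma tail_Emap (m : ℤ) (v : EuclideanSpace ℝ (Fin (n + 1))) :
    tail (Emap n lam m v) = tail v := by
  rw [Emap_eq_cons, tail_cons]

lemma Emap_zero (v : EuclideanSpace ℝ (Fin (n + 1))) : Emap n lam 0 v = v := by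
  rw [Emap_eq_cons, zpow_zero, one_mul, cons_zero_tail]

lemma Emap_smul (m : ℤ) (c : ℝ) (v : EuclideanSpace ℝ (Fin (n + 1))) :
    Emap n lam m (c • v) = c • Emap n lam m v := by
  rw [Emap_eq_cons, Emap_eq_cons, smul_cons, tail_smul, PiLp.smul_apply, smul_eq_mul,
    mul_left_comm]

lemma Emap_add (hlam : lam ≠ 0) (m₁ m₂ : ℤ) (v : EuclideanSpace ℝ (Fin (n + 1))) :
    Emap n lam (m₁ + m₂) v = Emap n lam m₁ (Emap n lam m₂ v) := by
  rw [Emap_eq_cons, Emap_eq_cons, Emap_apply_zero, tail_Emap, zpow_add₀ hlam, mul_assoc]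

lemma Emap_ne_zero (hlam : lam ≠ 0) (m : ℤ) {v : EuclideanSpace ℝ (Fin (n + 1))} (hv : v ≠ 0) :
    Emap n lam m v ≠ 0 := by
  intro h
  have hv' := congrArg (Emap n lam (-m)) h
  rw [← Emap_add hlam, neg_add_cancel, Emap_zero, ← zero_smul ℝ (0 : EuclideanSpace ℝ _),
    Emap_smul, zero_smul] at hv'
  exact hv hv'

lemma normActE_eq_normalize (m : ℤ) (v : EuclideanSpace ℝ (Fin (n + 1))) :
    normActE n lam m v = normalize (Emap n lam m v) := rfl

def dir (v : EuclideanSpace ℝ (Fin (n + 1))) : EuclideanSpace ℝ (Fin n) := normalize (tail v)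

/-- The tangent of the latitude of `v` above the equator `{v₁ = 0}`. -/
def ratio (v : EuclideanSpace ℝ (Fin (n + 1))) : ℝ := v 0 / ‖tail v‖

lemma dir_eq_smul (v : EuclideanSpace ℝ (Fin (n + 1))) : dir v = ‖tail v‖⁻¹ • tail v := rfl

lemma dir_smul_of_pos {c : ℝ} (hc : 0 < c) (v : EuclideanSpace ℝ (Fin (n + 1))) :
    dir (c • v) = dir v := by
  rw [dir, tail_smul, normalize_smul_of_pos hc, dir]

lemma ratio_smul_of_pos {c : ℝ} (hc : 0 < c) (v : EuclideanSpace ℝ (Fin (n + 1))) :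
    ratio (c • v) = ratio v := by
  rw [ratio, ratio, tail_smul, norm_smul, Real.norm_of_nonneg hc.le, PiLp.smul_apply, smul_eq_mul,
    mul_div_mul_left _ _ hc.ne']

lemma dir_normalize (v : EuclideanSpace ℝ (Fin (n + 1))) : dir (normalize v) = dir v := by
  rcases eq_or_ne v 0 with rfl | hv
  · rw [normalize_zero_eq_zero]
  · exact dir_smul_of_pos (inv_pos.2 (norm_pos_iff.2 hv)) v

lemma ratio_normalize (v : EuclideanSpace ℝ (Fin (n + 1))) : ratio (normalize v) = ratio v := by
  rcases eq_or_ne v 0 with rfl | hv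
  · rw [normalize_zero_eq_zero]
  · exact ratio_smul_of_pos (inv_pos.2 (norm_pos_iff.2 hv)) v

lemma dir_normActE (m : ℤ) (v : EuclideanSpace ℝ (Fin (n + 1))) :
    dir (normActE n lam m v) = dir v := by
  rw [normActE_eq_normalize, dir_normalize, dir, tail_Emap, dir]

lemma ratio_normActE (m : ℤ) (v : EuclideanSpace ℝ (Fin (n + 1))) :
    ratio (normActE n lam m v) = lam ^ m * ratio v := by
  rw [normActE_eq_normalize, ratio_normalize, ratio, ratio, tail_Emap, Emap_apply_zero,
    mul_div_assoc]

lemma mem_iff {v : EuclideanSpace ℝ (Fin (n + 1))} : v ∈ OmegaPlus n ↔ ‖v‖ = 1 ∧ 0 < ratio v := by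
  simp only [OmegaPlus, mem_sdiff, mem_ofPred_eq, mem_singleton_iff, and_assoc, and_congr_right_iff]
  intro hv
  rw [ratio, div_pos_iff, or_iff_left (fun h => (norm_nonneg _).not_gt h.2), norm_pos_iff]
  refine and_congr_right fun hv0 => ⟨fun hne htail => hne ?_, fun htail h => htail ?_⟩
  · have hsq := norm_sq_eq v
    rw [hv, htail, norm_zero] at hsq
    have : v 0 = 1 := by nlinarith
    rw [← cons_zero_tail v, this, htail, cons_one_zero]
  · rw [h, ← cons_one_zero, tail_cons]

lemma ne_zero_of_mem {v : EuclideanSpace ℝ (Fin (n + 1))} (hv : v ∈ OmegaPlus n) : v ≠ 0 := by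
  rintro rfl
  simp [mem_iff] at hv

lemma ratio_pos {v : EuclideanSpace ℝ (Fin (n + 1))} (hv : v ∈ OmegaPlus n) : 0 < ratio v :=
  (mem_iff.1 hv).2

lemma tail_ne_zero {v : EuclideanSpace ℝ (Fin (n + 1))} (hv : v ∈ OmegaPlus n) : tail v ≠ 0 := by
  intro h
  have := ratio_pos hv
  rw [ratio, h, norm_zero, div_zero] at this
  exact this.false

lemma normActE_mem (hlam : 0 < lam) (m : ℤ) {v : EuclideanSpace ℝ (Fin (n + 1))}
    (hv : v ∈ OmegaPlus n) : normActE n lam m v ∈ OmegaPlus n :=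
  mem_iff.2 ⟨norm_normalize_eq_one_iff.2 (Emap_ne_zero hlam.ne' m (ne_zero_of_mem hv)),
    ratio_normActE m v ▸ mul_pos (zpow_pos hlam m) (ratio_pos hv)⟩

lemma normActE_zero {v : EuclideanSpace ℝ (Fin (n + 1))} (hv : ‖v‖ = 1) :
    normActE n lam 0 v = v := by
  rw [normActE_eq_normalize, Emap_zero, normalize_eq_self_of_norm_eq_one hv]

lemma normActE_add (hlam : lam ≠ 0) (m₁ m₂ : ℤ) {v : EuclideanSpace ℝ (Fin (n + 1))}
    (hv : v ≠ 0) : normActE n lam (m₁ + m₂) v = normActE n lam m₁ (normActE n lam m₂ v) := by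
  have hpos : 0 < ‖Emap n lam m₂ v‖⁻¹ := inv_pos.2 (norm_pos_iff.2 (Emap_ne_zero hlam m₂ hv))
  rw [normActE_eq_normalize, Emap_add hlam, normActE_eq_normalize m₁, normActE, Emap_smul,
    normalize_smul_of_pos hpos]

def height (lam : ℝ) (v : EuclideanSpace ℝ (Fin (n + 1))) : ℝ := Real.logb lam (ratio v)

lemma height_normActE (h0 : 0 < lam) (h1 : lam ≠ 1) (m : ℤ) {v : EuclideanSpace ℝ (Fin (n + 1))}
    (hv : ratio v ≠ 0) : height lam (normActE n lam m v) = m + height lam v := by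
  rw [height, ratio_normActE, Real.logb_mul (zpow_pos h0 m).ne' hv, ← Real.rpow_intCast,
    Real.logb_rpow h0 h1, height]

lemma eq_zero_of_normActE_eq_self (h0 : 0 < lam) (h1 : lam ≠ 1) {m : ℤ}
    {v : EuclideanSpace ℝ (Fin (n + 1))} (hv : ratio v ≠ 0) (h : normActE n lam m v = v) :
    m = 0 := by
  have := height_normActE h0 h1 m hv
  rw [h, right_eq_add] at this
  exact_mod_cast this

lemma continuousOn_dir : ContinuousOn (dir (n := n)) (OmegaPlus n) :=
  continuousOn_normalize.comp continuous_tail.continuousOn fun _ hv => tail_ne_zero hv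

lemma continuousOn_height : ContinuousOn (height (n := n) lam) (OmegaPlus n) :=
  ((EuclideanSpace.proj (0 : Fin (n + 1))).continuous.continuousOn.div
    continuous_tail.norm.continuousOn fun _ hv => norm_ne_zero_iff.2 (tail_ne_zero hv)).logb
    fun _ hv => (ratio_pos hv).ne'

lemma norm_dir {v : EuclideanSpace ℝ (Fin (n + 1))} (hv : v ∈ OmegaPlus n) : ‖dir v‖ = 1 :=
  norm_normalize_eq_one_iff.2 (tail_ne_zero hv)

lemma ratio_cons (r : ℝ) {u : EuclideanSpace ℝ (Fin n)} (hu : ‖u‖ = 1) : ratio (cons r u) = r := by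
  rw [ratio, cons_zero, tail_cons, hu, div_one]

lemma dir_cons (r : ℝ) {u : EuclideanSpace ℝ (Fin n)} (hu : ‖u‖ = 1) : dir (cons r u) = u := by
  rw [dir, tail_cons, normalize_eq_self_of_norm_eq_one hu]

lemma normalize_cons_mem {r : ℝ} (hr : 0 < r) {u : EuclideanSpace ℝ (Fin n)} (hu : ‖u‖ = 1) :
    normalize (cons r u) ∈ OmegaPlus n := by
  have hne : cons r u ≠ 0 := fun h => by
    rw [← tail_cons r u, h, tail_zero, norm_zero] at hu
    exact zero_ne_one hu
  exact mem_iff.2 ⟨norm_normalize_eq_one_iff.2 hne, by rwa [ratio_normalize, ratio_cons r hu]⟩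

lemma normalize_cons_ratio_dir {v : EuclideanSpace ℝ (Fin (n + 1))} (hv : v ∈ OmegaPlus n) :
    normalize (cons (ratio v) (dir v)) = v := by
  have hpos : 0 < ‖tail v‖⁻¹ := inv_pos.2 (norm_pos_iff.2 (tail_ne_zero hv))
  rw [ratio, dir_eq_smul, div_eq_inv_mul, ← smul_cons, cons_zero_tail,
    normalize_smul_of_pos hpos, normalize_eq_self_of_norm_eq_one (mem_iff.1 hv).1]

lemma continuous_normalize_cons_rpow (hlam : 0 < lam) :
    Continuous fun p : Metric.sphere (0 : EuclideanSpace ℝ (Fin n)) 1 × ℝ =>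
      normalize (cons (lam ^ p.2) (p.1 : EuclideanSpace ℝ (Fin n))) := by
  refine continuousOn_normalize.comp_continuous (continuous_cons.comp
    (?_ : Continuous fun p : Metric.sphere (0 : EuclideanSpace ℝ (Fin n)) 1 × ℝ =>
      (lam ^ p.2, (p.1 : EuclideanSpace ℝ (Fin n))))) fun p => ?_
  · exact ((Real.continuous_const_rpow hlam.ne').comp continuous_snd).prodMk
      (continuous_subtype_val.comp continuous_fst)
  · exact ne_zero_of_mem (normalize_cons_mem (Real.rpow_pos_of_pos hlam p.2)
      (norm_eq_of_mem_sphere p.1)) ∘ fun h => by rw [h, normalize_zero_eq_zero]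

variable (lam) in
def toSphereProd (v : OmegaPlus n) : Metric.sphere (0 : EuclideanSpace ℝ (Fin n)) 1 × ℝ :=
  (⟨dir v, mem_sphere_zero_iff_norm.2 (norm_dir v.2)⟩, height lam v.1)

def ofSphereProd (hlam : 0 < lam) (p : Metric.sphere (0 : EuclideanSpace ℝ (Fin n)) 1 × ℝ) :
    OmegaPlus n :=
  ⟨normalize (cons (lam ^ p.2) p.1),
    normalize_cons_mem (Real.rpow_pos_of_pos hlam p.2) (norm_eq_of_mem_sphere p.1)⟩

@[simp] lemma coe_ofSphereProd (hlam : 0 < lam)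
    (p : Metric.sphere (0 : EuclideanSpace ℝ (Fin n)) 1 × ℝ) :
    (ofSphereProd hlam p : EuclideanSpace ℝ (Fin (n + 1))) = normalize (cons (lam ^ p.2) p.1) :=
  rfl

def chart (h0 : 0 < lam) (h1 : lam ≠ 1) :
    OmegaPlus n ≃ₜ Metric.sphere (0 : EuclideanSpace ℝ (Fin n)) 1 × ℝ where
  toFun := toSphereProd lam
  invFun := ofSphereProd h0
  left_inv v := Subtype.ext <| by
    rw [coe_ofSphereProd]
    dsimp only [toSphereProd]
    rw [height, Real.rpow_logb h0 h1 (ratio_pos v.2), normalize_cons_ratio_dir v.2]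
  right_inv p := by
    have hu := norm_eq_of_mem_sphere p.1
    refine Prod.ext (Subtype.ext ?_) ?_
    · exact (dir_normalize _).trans (dir_cons _ hu)
    · dsimp only [toSphereProd]
      rw [coe_ofSphereProd, height, ratio_normalize, ratio_cons _ hu, Real.logb_rpow h0 h1]
  continuous_toFun :=
    ((continuousOn_iff_continuous_domRestrict.1 continuousOn_dir).subtype_mk _).prodMk
      (continuousOn_iff_continuous_domRestrict.1 continuousOn_height)
  continuous_invFun := (continuous_normalize_cons_rpow h0).subtype_mk _

lemma chart_normActE (h0 : 0 < lam) (h1 : lam ≠ 1) (m : ℤ) (v : OmegaPlus n) :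
    chart h0 h1 ⟨normActE n lam m v, normActE_mem h0 m v.2⟩ =
      ((chart h0 h1 v).1, m + (chart h0 h1 v).2) :=
  Prod.ext (Subtype.ext (dir_normActE m v.1)) (height_normActE h0 h1 m (ratio_pos v.2).ne')

variable (lam) in
def toQuotient (h0 : 0 < lam) (h1 : lam ≠ 1) :
    C(OmegaPlus n, Metric.sphere (0 : EuclideanSpace ℝ (Fin n)) 1 × AddCircle (1 : ℝ)) :=
  ⟨Prod.map id (↑) ∘ chart h0 h1,
    (continuous_id.prodMap continuous_quot_mk).comp (chart h0 h1).continuous⟩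

lemma isQuotientMap_toQuotient (h0 : 0 < lam) (h1 : lam ≠ 1) :
    Topology.IsQuotientMap (toQuotient (n := n) lam h0 h1) :=
  ((IsOpenQuotientMap.id.prodMap QuotientAddGroup.isOpenQuotientMap_mk).comp
    (chart h0 h1).isOpenQuotientMap).isQuotientMap

lemma toQuotient_apply (h0 : 0 < lam) (h1 : lam ≠ 1) (v : OmegaPlus n) :
    toQuotient lam h0 h1 v = ((chart h0 h1 v).1, ((chart h0 h1 v).2 : AddCircle (1 : ℝ))) :=
  rfl

lemma toQuotient_eq_iff (h0 : 0 < lam) (h1 : lam ≠ 1) (v w : OmegaPlus n) :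
    toQuotient lam h0 h1 v = toQuotient lam h0 h1 w ↔ orbitRelE n lam v w := by
  simp only [toQuotient_apply, Prod.ext_iff, QuotientAddGroup.eq,
    AddSubgroup.mem_zmultiples_iff, zsmul_one]
  constructor
  · rintro ⟨hdir, m, hm⟩
    refine ⟨m, congrArg Subtype.val
      ((chart h0 h1).injective (a₁ := ⟨_, normActE_mem h0 m v.2⟩) ?_)⟩
    rw [chart_normActE]
    exact Prod.ext hdir (by rw [hm]; ring)
  · rintro ⟨m, hm⟩
    obtain rfl : w = ⟨_, normActE_mem h0 m v.2⟩ := Subtype.ext hm.symm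
    rw [chart_normActE]
    exact ⟨rfl, m, by ring⟩

def quotientHomeomorph (h0 : 0 < lam) (h1 : lam ≠ 1) :
    Quot (orbitRelE n lam) ≃ₜ Metric.sphere (0 : EuclideanSpace ℝ (Fin n)) 1 × AddCircle (1 : ℝ) :=
  (Homeomorph.Quot.congrRight (r' := Setoid.ker (toQuotient lam h0 h1))
    fun v w => (toQuotient_eq_iff h0 h1 v w).symm).trans (isQuotientMap_toQuotient h0 h1).homeomorph

lemma finite_setOf_normActE_image_inter_nonempty (h0 : 0 < lam) (h1 : lam ≠ 1)
    {K L : Set (EuclideanSpace ℝ (Fin (n + 1)))} (hK : K ⊆ OmegaPlus n) (hL : L ⊆ OmegaPlus n)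
    (hKc : IsCompact K) (hLc : IsCompact L) :
    {m : ℤ | (normActE n lam m '' K ∩ L).Nonempty}.Finite := by
  have hcpt :
      IsCompact ((fun p : ℝ × ℝ => p.1 - p.2) '' ((height lam '' L) ×ˢ (height lam '' K))) :=
    ((hLc.image_of_continuousOn (continuousOn_height.mono hL)).prod
      (hKc.image_of_continuousOn (continuousOn_height.mono hK))).image continuous_sub
  refine (Int.isClosedEmbedding_coe_real.isCompact_preimage hcpt).finite_of_discrete.subset ?_
  rintro m ⟨_, ⟨x, hx, rfl⟩, hxL⟩
  refine ⟨(height lam (normActE n lam m x), height lam x), ⟨⟨_, hxL, rfl⟩, ⟨x, hx, rfl⟩⟩, ?_⟩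
  rw [height_normActE h0 h1 m (ratio_pos (hK hx)).ne']
  exact add_sub_cancel_right _ _

end OmegaPlus

theorem omegaPlus_action_and_quotient_general (n : ℕ)
    (lam : ℝ) (hlam : 1 < lam) :
    (∀ (m : ℤ) (v : EuclideanSpace ℝ (Fin (n + 1))), v ∈ OmegaPlus n →
      normActE n lam m v ∈ OmegaPlus n) ∧
    (∀ v ∈ OmegaPlus n, normActE n lam 0 v = v) ∧
    (∀ (m₁ m₂ : ℤ) (v : EuclideanSpace ℝ (Fin (n + 1))), v ∈ OmegaPlus n →
      normActE n lam (m₁ + m₂) v = normActE n lam m₁ (normActE n lam m₂ v)) ∧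
    (∀ (m : ℤ) (v : EuclideanSpace ℝ (Fin (n + 1))), v ∈ OmegaPlus n →
      normActE n lam m v = v → m = 0) ∧
    (∀ K L : Set (EuclideanSpace ℝ (Fin (n + 1))), K ⊆ OmegaPlus n →
      L ⊆ OmegaPlus n → IsCompact K → IsCompact L →
      {m : ℤ | (normActE n lam m '' K ∩ L).Nonempty}.Finite) ∧
    Nonempty (Quot (orbitRelE n lam) ≃ₜ
      (Metric.sphere (0 : EuclideanSpace ℝ (Fin n)) 1) × AddCircle (1 : ℝ)) := by
  have h0 : 0 < lam := zero_lt_one.trans hlam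
  have h1 : lam ≠ 1 := hlam.ne'
  exact ⟨fun m _ hv => OmegaPlus.normActE_mem h0 m hv,
    fun _ hv => OmegaPlus.normActE_zero (OmegaPlus.mem_iff.1 hv).1,
    fun m₁ m₂ _ hv => OmegaPlus.normActE_add h0.ne' m₁ m₂ (OmegaPlus.ne_zero_of_mem hv),
    fun _ _ hv => OmegaPlus.eq_zero_of_normActE_eq_self h0 h1 (OmegaPlus.ratio_pos hv).ne',
    fun _ _ hK hL hKc hLc =>
      OmegaPlus.finite_setOf_normActE_image_inter_nonempty h0 h1 hK hL hKc hLc,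
    ⟨OmegaPlus.quotientHomeomorph h0 h1⟩⟩

/-- For `n ≥ 2` and `λ > 1`, the `ℤ`-action `m • v := E_λ^m v / ‖E_λ^m v‖` on
`Ω⁺` is well-defined, free and properly discontinuous, and the quotient
`Ω⁺/ℤ` is homeomorphic to `S^{n-1} × (ℝ/ℤ)`. -/
theorem omegaPlus_action_and_quotient (n : ℕ) (hn : 2 ≤ n)
    (lam : ℝ) (hlam : 1 < lam) :
    (∀ (m : ℤ) (v : EuclideanSpace ℝ (Fin (n + 1))), v ∈ OmegaPlus n →
      normActE n lam m v ∈ OmegaPlus n) ∧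
    (∀ v ∈ OmegaPlus n, normActE n lam 0 v = v) ∧
    (∀ (m₁ m₂ : ℤ) (v : EuclideanSpace ℝ (Fin (n + 1))), v ∈ OmegaPlus n →
      normActE n lam (m₁ + m₂) v = normActE n lam m₁ (normActE n lam m₂ v)) ∧
    (∀ (m : ℤ) (v : EuclideanSpace ℝ (Fin (n + 1))), v ∈ OmegaPlus n →
      normActE n lam m v = v → m = 0) ∧
    (∀ K L : Set (EuclideanSpace ℝ (Fin (n + 1))), K ⊆ OmegaPlus n →
      L ⊆ OmegaPlus n → IsCompact K → IsCompact L →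
      {m : ℤ | (normActE n lam m '' K ∩ L).Nonempty}.Finite) ∧
    Nonempty (Quot (orbitRelE n lam) ≃ₜ
      (Metric.sphere (0 : EuclideanSpace ℝ (Fin n)) 1) × AddCircle (1 : ℝ)) :=
  omegaPlus_action_and_quotient_general n lam hlam
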